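/- The parameters of the univariate zero-inflated Poisson log-normal distribution are identified by the first three moments: if π, π′ ∈ (0,1], μ, μ′ ∈ ℝ and σ, σ′ > 0 are such that the distributions ZIPLN(π, μ, σ²) and ZIPLN(π′, μ′, σ′²) have the same first moment, the same second moment and the same third moment, then π = π′, μ = μ′ and σ = σ′. -/

import Mathlib

open MeasureTheory ProbabilityTheory Real

/-- The probability mass function of the univariate zero-inflated Poisson log-normal
distribution ZIPLN(π, μ, σ²):
`p(y) = (1−π)·1{y=0} + π·∫ exp(−e^{μ+z})·e^{(μ+z)y}/y! dγ(z)`,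
where `γ` is the centered Gaussian measure on ℝ with variance `σ²`.
Here `pr` plays the role of the zero-inflation probability π. -/
noncomputable def ziplnPMF (pr μ σ : ℝ) (y : ℕ) : ℝ :=
  (1 - pr) * (if y = 0 then 1 else 0) +
    pr * ∫ z, exp (-exp (μ + z)) * exp ((μ + z) * y) / (Nat.factorial y)
        ∂(gaussianReal 0 ⟨σ ^ 2, sq_nonneg σ⟩)

/-! Conditionally on the Gaussian effect `Z`, the non-inflated part is Poisson with mean
`e^{μ+Z}`, whose `j`-th factorial moment is `e^{j(μ+Z)}`. Since `y(y-1)⋯(y-j+1)` vanishes at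
`y = 0` for `j ≥ 1`, the zero-inflation is invisible to factorial moments, and the
Gaussian moment generating function gives `E[Y(Y-1)⋯(Y-j+1)] = π·exp(jμ + j²σ²/2)`.
The first three moments determine the first three factorial moments; ratios of consecutive
ones give `exp(μ + 3σ²/2)` and `exp(μ + 5σ²/2)`, hence `σ²` and `μ`, and then `π`. -/

open scoped NNReal Nat

theorem Nat.mul_descFactorial_eq_descFactorial_succ_add (n k : ℕ) :
    n * n.descFactorial k = n.descFactorial (k + 1) + k * n.descFactorial k := by
  rw [Nat.descFactorial_succ, ← Nat.add_mul]
  rcases le_or_gt k n with h | h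
  · rw [Nat.sub_add_cancel h]
  · simp [Nat.descFactorial_of_lt h]

theorem Nat.sq_eq_descFactorial_two_add (n : ℕ) : n ^ 2 = n.descFactorial 2 + n := by
  simpa [sq] using Nat.mul_descFactorial_eq_descFactorial_succ_add n 1

theorem Nat.pow_three_eq_descFactorial_three_add (n : ℕ) :
    n ^ 3 = n.descFactorial 3 + 3 * n.descFactorial 2 + n := by
  rw [pow_succ', Nat.sq_eq_descFactorial_two_add, mul_add,
    Nat.mul_descFactorial_eq_descFactorial_succ_add, ← sq, Nat.sq_eq_descFactorial_two_add]
  ring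

lemma hasSum_descFactorial_mul_poisson (r : ℝ) (j : ℕ) :
    HasSum (fun n : ℕ => (n.descFactorial j : ℝ) * (exp (-r) * r ^ n / n !)) (r ^ j) := by
  have hshift (n : ℕ) : ((n + j).descFactorial j : ℝ) * (exp (-r) * r ^ (n + j) / (n + j)!)
      = exp (-r) * r ^ j * (r ^ n / n !) := by
    have h := Nat.factorial_mul_descFactorial (Nat.le_add_left j n)
    rw [Nat.add_sub_cancel] at h
    rw [← h, Nat.cast_mul, pow_add]
    have hd : ((n + j).descFactorial j : ℝ) ≠ 0 := by
      exact_mod_cast (Nat.descFactorial_eq_zero_iff_lt.not.mpr (by omega))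
    field_simp
  have hvanish :
      ∀ n ∉ Set.range (· + j), (n.descFactorial j : ℝ) * (exp (-r) * r ^ n / n !) = 0 := by
    intro n hn
    have hnj : n < j := by
      by_contra h
      exact hn ⟨n - j, Nat.sub_add_cancel (not_lt.mp h)⟩
    simp [Nat.descFactorial_of_lt hnj]
  have hexp : exp (-r) * r ^ j * NormedSpace.exp r = r ^ j := by
    rw [← exp_eq_exp_ℝ, mul_right_comm, ← exp_add, neg_add_cancel, exp_zero, one_mul]
  rw [← (add_left_injective j).hasSum_iff hvanish, ← hexp]
  exact ((NormedSpace.expSeries_div_hasSum_exp r).mul_left _).congr_fun hshift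

lemma hasSum_integral_of_nonneg {α ι : Type*} [MeasurableSpace α] [Countable ι]
    {μ : Measure α} {F : ι → α → ℝ} {f : α → ℝ} (hF_meas : ∀ i, AEStronglyMeasurable (F i) μ)
    (hF_nonneg : ∀ i, 0 ≤ᵐ[μ] F i) (hf : Integrable f μ)
    (h_lim : ∀ᵐ a ∂μ, HasSum (F · a) (f a)) :
    HasSum (fun i => ∫ a, F i a ∂μ) (∫ a, f a ∂μ) := by
  refine hasSum_integral_of_dominated_convergence F hF_meas (fun i => ?_)
    (h_lim.mono fun a h => h.summable)
    (hf.congr (h_lim.mono fun a h => h.tsum_eq.symm)) h_lim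
  filter_upwards [hF_nonneg i] with a ha
  rw [Real.norm_of_nonneg ha]

lemma exp_add_pow (a z : ℝ) (j : ℕ) : exp (a + z) ^ j = exp (j * a) * exp (j * z) := by
  rw [← exp_nat_mul, mul_add, exp_add]

lemma integrable_exp_add_pow_gaussianReal (m a : ℝ) (v : ℝ≥0) (j : ℕ) :
    Integrable (fun z => exp (a + z) ^ j) (gaussianReal m v) := by
  simp_rw [exp_add_pow]
  exact (integrable_exp_mul_gaussianReal _).const_mul _

lemma integral_exp_add_pow_gaussianReal (m a : ℝ) (v : ℝ≥0) (j : ℕ) :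
    ∫ z, exp (a + z) ^ j ∂gaussianReal m v = exp (j * (a + m) + v * j ^ 2 / 2) := by
  have hmgf := congrFun (mgf_id_gaussianReal (μ := m) (v := v)) j
  simp only [mgf, id] at hmgf
  simp_rw [exp_add_pow, integral_const_mul, hmgf, ← exp_add]
  ring_nf

-- For `j ≥ 1` the `j`-th factorial moment of ZIPLN(pr, μ, σ²); at `j = 0` it is `pr`, not `1`.
noncomputable def ziplnFactorialMoment (pr μ σ : ℝ) (j : ℕ) : ℝ :=
  pr * exp (j * μ + σ ^ 2 * j ^ 2 / 2)

lemma descFactorial_mul_ziplnPMF (pr μ σ : ℝ) {j : ℕ} (hj : j ≠ 0) (y : ℕ) :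
    (y.descFactorial j : ℝ) * ziplnPMF pr μ σ y
      = pr * ∫ z, (y.descFactorial j : ℝ) * (exp (-exp (μ + z)) * exp (μ + z) ^ y / y !)
          ∂gaussianReal 0 ⟨σ ^ 2, sq_nonneg σ⟩ := by
  rcases eq_or_ne y 0 with rfl | hy
  · simp [Nat.descFactorial_of_lt (Nat.pos_of_ne_zero hj)]
  · simp only [ziplnPMF, hy, if_false, mul_zero, zero_add, integral_const_mul,
      mul_comm _ (y : ℝ), exp_nat_mul]
    ring

lemma hasSum_descFactorial_mul_ziplnPMF (pr μ σ : ℝ) {j : ℕ} (hj : j ≠ 0) :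
    HasSum (fun y : ℕ => (y.descFactorial j : ℝ) * ziplnPMF pr μ σ y)
      (ziplnFactorialMoment pr μ σ j) := by
  have hpoisson : HasSum
      (fun y : ℕ => ∫ z,
        (y.descFactorial j : ℝ) * (exp (-exp (μ + z)) * exp (μ + z) ^ y / y !)
        ∂gaussianReal 0 ⟨σ ^ 2, sq_nonneg σ⟩)
      (∫ z, exp (μ + z) ^ j ∂gaussianReal 0 ⟨σ ^ 2, sq_nonneg σ⟩) :=
    hasSum_integral_of_nonneg (fun y => by fun_prop) (fun y => ae_of_all _ fun z => by positivity)
      (integrable_exp_add_pow_gaussianReal _ _ _ _)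
      (ae_of_all _ fun z => hasSum_descFactorial_mul_poisson _ _)
  have hmoment : pr * ∫ z, exp (μ + z) ^ j ∂gaussianReal 0 ⟨σ ^ 2, sq_nonneg σ⟩
      = ziplnFactorialMoment pr μ σ j := by
    rw [integral_exp_add_pow_gaussianReal 0 μ ⟨σ ^ 2, sq_nonneg σ⟩ j, ziplnFactorialMoment,
      add_zero]
    rfl
  exact hmoment ▸ (hpoisson.mul_left pr).congr_fun (descFactorial_mul_ziplnPMF pr μ σ hj)

section Moments

variable (pr μ σ : ℝ)

lemma hasSum_mul_ziplnPMF :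
    HasSum (fun y : ℕ => (y : ℝ) * ziplnPMF pr μ σ y) (ziplnFactorialMoment pr μ σ 1) :=
  (hasSum_descFactorial_mul_ziplnPMF pr μ σ one_ne_zero).congr_fun fun y => by
    rw [Nat.descFactorial_one]

lemma hasSum_sq_mul_ziplnPMF :
    HasSum (fun y : ℕ => (y : ℝ) ^ 2 * ziplnPMF pr μ σ y)
      (ziplnFactorialMoment pr μ σ 2 + ziplnFactorialMoment pr μ σ 1) := by
  refine ((hasSum_descFactorial_mul_ziplnPMF pr μ σ two_ne_zero).add
    (hasSum_mul_ziplnPMF pr μ σ)).congr_fun fun y => ?_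
  rw [← add_mul]
  exact_mod_cast
    congrArg (fun n : ℕ => (n : ℝ) * ziplnPMF pr μ σ y) (Nat.sq_eq_descFactorial_two_add y)

lemma hasSum_pow_three_mul_ziplnPMF :
    HasSum (fun y : ℕ => (y : ℝ) ^ 3 * ziplnPMF pr μ σ y)
      (ziplnFactorialMoment pr μ σ 3 + 3 * ziplnFactorialMoment pr μ σ 2
        + ziplnFactorialMoment pr μ σ 1) := by
  refine (((hasSum_descFactorial_mul_ziplnPMF pr μ σ three_ne_zero).add
    ((hasSum_descFactorial_mul_ziplnPMF pr μ σ two_ne_zero).mul_left 3)).add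
    (hasSum_mul_ziplnPMF pr μ σ)).congr_fun fun y => ?_
  have hy : (y : ℝ) ^ 3 = y.descFactorial 3 + 3 * y.descFactorial 2 + y := by
    exact_mod_cast Nat.pow_three_eq_descFactorial_three_add y
  rw [hy]
  ring

end Moments

lemma sub_eq_sub_of_mul_exp_eq {p p' a a' b b' : ℝ} (hp : p ≠ 0) (ha : p * exp a = p' * exp a')
    (hb : p * exp b = p' * exp b') : b - a = b' - a' := by
  have h : p * exp (b + a') = p * exp (a + b') := by
    rw [exp_add, exp_add]
    linear_combination exp a' * hb - exp b' * ha
  have := exp_injective (mul_left_cancel₀ hp h)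
  linarith

lemma eq_of_ziplnFactorialMoment_eq {pr pr' μ μ' σ σ' : ℝ} (hpr : pr ≠ 0) (hσ : 0 < σ)
    (hσ' : 0 < σ') (h₁ : ziplnFactorialMoment pr μ σ 1 = ziplnFactorialMoment pr' μ' σ' 1)
    (h₂ : ziplnFactorialMoment pr μ σ 2 = ziplnFactorialMoment pr' μ' σ' 2)
    (h₃ : ziplnFactorialMoment pr μ σ 3 = ziplnFactorialMoment pr' μ' σ' 3) :
    pr = pr' ∧ μ = μ' ∧ σ = σ' := by
  simp only [ziplnFactorialMoment, Nat.cast_one, Nat.cast_ofNat] at h₁ h₂ h₃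
  have d₁₂ := sub_eq_sub_of_mul_exp_eq hpr h₁ h₂
  have d₂₃ := sub_eq_sub_of_mul_exp_eq hpr h₂ h₃
  have hσσ' : σ = σ' := (pow_left_inj₀ hσ.le hσ'.le two_ne_zero).mp (by linarith)
  have hμ : μ = μ' := by subst hσσ'; linarith
  subst hμ hσσ'
  exact ⟨mul_right_cancel₀ (exp_ne_zero _) h₁, rfl, rfl⟩

theorem zipln_identifiable_general (pr pr' μ μ' σ σ' : ℝ)
    (hpr : pr ∈ Set.Ioc (0 : ℝ) 1)
    (hσ : 0 < σ) (hσ' : 0 < σ')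
    (h₁ : ∑' y : ℕ, (y : ℝ) * ziplnPMF pr μ σ y
        = ∑' y : ℕ, (y : ℝ) * ziplnPMF pr' μ' σ' y)
    (h₂ : ∑' y : ℕ, (y : ℝ) ^ 2 * ziplnPMF pr μ σ y
        = ∑' y : ℕ, (y : ℝ) ^ 2 * ziplnPMF pr' μ' σ' y)
    (h₃ : ∑' y : ℕ, (y : ℝ) ^ 3 * ziplnPMF pr μ σ y
        = ∑' y : ℕ, (y : ℝ) ^ 3 * ziplnPMF pr' μ' σ' y) :
    pr = pr' ∧ μ = μ' ∧ σ = σ' := by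
  simp only [(hasSum_mul_ziplnPMF _ _ _).tsum_eq, (hasSum_sq_mul_ziplnPMF _ _ _).tsum_eq,
    (hasSum_pow_three_mul_ziplnPMF _ _ _).tsum_eq] at h₁ h₂ h₃
  exact eq_of_ziplnFactorialMoment_eq hpr.1.ne' hσ hσ' h₁ (by linarith) (by linarith)

/-- The parameters of the univariate zero-inflated Poisson log-normal distribution are
identified by its first three moments: if two ZIPLN distributions share the same first,
second and third moments, then their parameters coincide. -/
theorem zipln_identifiable (pr pr' μ μ' σ σ' : ℝ)
    (hpr : pr ∈ Set.Ioc (0 : ℝ) 1) (hpr' : pr' ∈ Set.Ioc (0 : ℝ) 1)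
    (hσ : 0 < σ) (hσ' : 0 < σ')
    (h₁ : ∑' y : ℕ, (y : ℝ) * ziplnPMF pr μ σ y
        = ∑' y : ℕ, (y : ℝ) * ziplnPMF pr' μ' σ' y)
    (h₂ : ∑' y : ℕ, (y : ℝ) ^ 2 * ziplnPMF pr μ σ y
        = ∑' y : ℕ, (y : ℝ) ^ 2 * ziplnPMF pr' μ' σ' y)
    (h₃ : ∑' y : ℕ, (y : ℝ) ^ 3 * ziplnPMF pr μ σ y
        = ∑' y : ℕ, (y : ℝ) ^ 3 * ziplnPMF pr' μ' σ' y) :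
    pr = pr' ∧ μ = μ' ∧ σ = σ' :=
  zipln_identifiable_general pr pr' μ μ' σ σ' hpr hσ hσ' h₁ h₂ h₃
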